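/- arXiv:1910.08647 — 3 statements merged into one kernel-verified Lean document; each statement's English description precedes it below -/
import Mathlib

section
/- The inference rule "from φ infer Rφ" is derivable: for every formula φ ∈ Φ, if ⊢ φ, then ⊢ Rφ. -/
/-- Formulae of the language Φ: propositional variables, negation, implication,
the necessity modality `N` (`nec`), and the attacker's blameworthiness modality `A` (`blame`). -/
inductive Formula : Type
  | var : ℕ → Formula
  | neg : Formula → Formula
  | imp : Formula → Formula → Formula
  | nec : Formula → Formula
  | blame : Formula → Formula

namespace Formula

/-- Conjunction, defined through `→` and `¬` in the standard way. -/
def conj (φ ψ : Formula) : Formula := neg (imp φ (neg ψ))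

/-- Disjunction, defined through `→` and `¬` in the standard way. -/
def disj (φ ψ : Formula) : Formula := imp (neg φ) ψ

/-- Biconditional, defined through `→` and `¬` in the standard way. -/
def biimp (φ ψ : Formula) : Formula := conj (imp φ ψ) (imp ψ φ)

/-- `R φ` is an abbreviation for `¬(φ → A φ)`. -/
def R (φ : Formula) : Formula := neg (imp φ (blame φ))

end Formula

/-- A formula is a propositional tautology if it evaluates to true under every
truth assignment that respects `¬` and `→` (treating all other formulae as atoms). -/
def IsTaut (φ : Formula) : Prop :=
  ∀ v : Formula → Bool,
    (∀ ψ, v ψ.neg = !(v ψ)) →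
    (∀ ψ χ, v (ψ.imp χ) = (!(v ψ) || v χ)) →
    v φ = true

/-- Provability `⊢ φ` in the logical system for blameworthiness in security games. -/
inductive Prov : Formula → Prop
  | taut {φ} : IsTaut φ → Prov φ
  | truthN (φ : Formula) : Prov ((φ.nec).imp φ)
  | truthA (φ : Formula) : Prov ((φ.blame).imp φ)
  | negIntro (φ : Formula) : Prov (((φ.nec).neg).imp (((φ.nec).neg).nec))
  | distrib (φ ψ : Formula) : Prov (((φ.imp ψ).nec).imp ((φ.nec).imp (ψ.nec)))
  | unavoid (φ : Formula) : Prov ((φ.nec).imp ((φ.blame).neg))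
  | strictCond (φ ψ : Formula) : Prov (((φ.imp ψ).nec).imp ((ψ.blame).imp (φ.imp (φ.blame))))
  | conjAx (φ ψ : Formula) : Prov (((φ.conj ψ).blame).imp ((φ.blame).disj (ψ.blame)))
  | noBlame (φ : Formula) : Prov (((φ.imp (φ.blame)).blame).neg)
  | mp {φ ψ} : Prov (φ.imp ψ) → Prov φ → Prov ψ
  | necRule {φ} : Prov φ → Prov (φ.nec)

/-- `X ⊢ φ`: provability from the theorems of the logical system together with
additional hypotheses `X`, using only the Modus Ponens rule. -/
inductive ProvFrom (X : Set Formula) : Formula → Prop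
  | hyp {φ} : φ ∈ X → ProvFrom X φ
  | thm {φ} : Prov φ → ProvFrom X φ
  | mp {φ ψ} : ProvFrom X (φ.imp ψ) → ProvFrom X φ → ProvFrom X ψ

/-- A set of formulae is consistent if no contradiction is derivable from it. -/
def Consistent (X : Set Formula) : Prop := ¬ ∃ φ, ProvFrom X φ ∧ ProvFrom X φ.neg

/-- A maximal consistent set of formulae. -/
def MaxConsistent (X : Set Formula) : Prop :=
  Consistent X ∧ ∀ Y, X ⊆ Y → Consistent Y → Y = X

/-- A security game: a set `D` of actions of the defender; for each `d ∈ D` a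
nonempty set `A d` of actions of the attacker in response to `d`; and a valuation
assigning to each propositional variable a set of action profiles `(d, a)`. -/
structure SecurityGame where
  D : Type
  A : D → Type
  nonempty : ∀ d, Nonempty (A d)
  val : ℕ → ∀ d : D, A d → Prop

/-- The satisfaction relation `(d, a) ⊨ φ` of a security game. -/
def Sat (G : SecurityGame) : Formula → ∀ d : G.D, G.A d → Prop
  | .var p, d, a => G.val p d a
  | .neg φ, d, a => ¬ Sat G φ d a
  | .imp φ ψ, d, a => Sat G φ d a → Sat G ψ d a
  | .nec φ, _, _ => ∀ (d' : G.D) (a' : G.A d'), Sat G φ d' a'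
  | .blame φ, d, a => Sat G φ d a ∧ ∃ a' : G.A d, ¬ Sat G φ d a'

/-- The set Ω of the canonical game `G(X)`: all maximal consistent sets of formulae
containing `{φ | N φ ∈ X}`. -/
def canonicalOmega (X : Set Formula) : Set (Set Formula) :=
  {ω | MaxConsistent ω ∧ ∀ φ, φ.nec ∈ X → φ ∈ ω}

/-- The indistinguishability relation `ω ∼ ω'` of the canonical game. -/
def simRel (ω ω' : Set Formula) : Prop := ∀ φ : Formula, φ.R ∈ ω ↔ φ.R ∈ ω'

/-- The `∼`-equivalence class `[δ]` of `δ` inside Ω. -/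
def eqClass (X : Set Formula) (δ : Set Formula) : Set (Set Formula) :=
  {ω ∈ canonicalOmega X | simRel δ ω}

/-- The canonical security game `G(X)`. -/
def canonicalGame (X : Set Formula) : SecurityGame where
  D := canonicalOmega X
  A := fun δ => {ω : canonicalOmega X // simRel δ.val ω.val}
  nonempty := fun δ => ⟨⟨δ, fun _ => Iff.rfl⟩⟩
  val := fun p _ a => Formula.var p ∈ a.val.val

theorem isTaut_imp_imp_neg_imp (φ ψ : Formula) : IsTaut (φ.imp (ψ.neg.imp (φ.imp ψ).neg)) := by
  intro v hneg himp
  simp only [himp, hneg]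
  cases v φ <;> cases v ψ <;> rfl

theorem Prov.neg_blame {φ : Formula} (h : Prov φ) : Prov φ.blame.neg :=
  Prov.mp (Prov.unavoid φ) (Prov.necRule h)

/-- The inference rule "from `φ` infer `R φ`" is derivable: if `⊢ φ` then `⊢ R φ`. -/
theorem R_necessitation (φ : Formula) (h : Prov φ) : Prov φ.R :=
  Prov.mp (Prov.mp (Prov.taut (isTaut_imp_imp_neg_imp φ φ.blame)) h) h.neg_blame
end

section
/- In the canonical game G(X): for any ω, ω' ∈ Ω and any formula φ, if Nφ ∈ ω then φ ∈ ω'. -/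
/-! Negative introspection makes `N φ` decided uniformly across Ω: a maximal consistent `X`
contains either `N φ`, so that `φ` lies in every `ω ∈ Ω`, or `N ¬N φ`, so that `¬N φ` lies in
every `ω ∈ Ω`. -/

lemma isTaut_imp_self (φ : Formula) : IsTaut (φ.imp φ) := by
  intro v _ hi
  simp [hi]

lemma isTaut_imp_intro (φ ψ : Formula) : IsTaut (ψ.imp (φ.imp ψ)) := by
  intro v _ hi
  rw [hi, hi]
  cases v φ <;> cases v ψ <;> rfl

lemma isTaut_imp_distrib (φ χ ψ : Formula) :
    IsTaut ((φ.imp (χ.imp ψ)).imp ((φ.imp χ).imp (φ.imp ψ))) := by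
  intro v _ hi
  simp only [hi]
  cases v φ <;> cases v χ <;> cases v ψ <;> rfl

lemma isTaut_by_contradiction (φ ψ : Formula) :
    IsTaut ((φ.imp ψ).imp ((φ.imp ψ.neg).imp φ.neg)) := by
  intro v hn hi
  simp only [hi, hn]
  cases v φ <;> cases v ψ <;> rfl

namespace ProvFrom

variable {X : Set Formula} {φ ψ : Formula}

lemma cut (h : ProvFrom (insert φ X) ψ) (hφ : ProvFrom X φ) : ProvFrom X ψ := by
  induction h with
  | hyp h =>
    rcases h with rfl | h
    · exact hφ
    · exact .hyp h
  | thm h => exact .thm h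
  | mp _ _ ih₁ ih₂ => exact .mp ih₁ ih₂

lemma deduction (h : ProvFrom (insert φ X) ψ) : ProvFrom X (φ.imp ψ) := by
  induction h with
  | hyp h =>
    rcases h with rfl | h
    · exact .thm (.taut (isTaut_imp_self _))
    · exact .mp (.thm (.taut (isTaut_imp_intro _ _))) (.hyp h)
  | thm h => exact .mp (.thm (.taut (isTaut_imp_intro _ _))) (.thm h)
  | mp _ _ ih₁ ih₂ => exact .mp (.mp (.thm (.taut (isTaut_imp_distrib _ _ _))) ih₁) ih₂

end ProvFrom

lemma Consistent.neg_notMem {X : Set Formula} {φ : Formula} (hX : Consistent X) (h : φ ∈ X) :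
    φ.neg ∉ X :=
  fun hneg => hX ⟨φ, .hyp h, .hyp hneg⟩

namespace MaxConsistent

variable {X : Set Formula} {φ : Formula}

lemma mem_of_consistent_insert (hX : MaxConsistent X) (h : Consistent (insert φ X)) :
    φ ∈ X :=
  hX.2 _ (Set.subset_insert _ _) h ▸ Set.mem_insert _ _

lemma mem_of_provFrom (hX : MaxConsistent X) (h : ProvFrom X φ) : φ ∈ X :=
  hX.mem_of_consistent_insert fun ⟨ψ, h₁, h₂⟩ => hX.1 ⟨ψ, h₁.cut h, h₂.cut h⟩

lemma neg_mem_of_notMem (hX : MaxConsistent X) (h : φ ∉ X) : φ.neg ∈ X := by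
  have hinc : ¬ Consistent (insert φ X) := fun hc => h (hX.mem_of_consistent_insert hc)
  obtain ⟨ψ, h₁, h₂⟩ := not_not.mp hinc
  exact hX.mem_of_provFrom
    (.mp (.mp (.thm (.taut (isTaut_by_contradiction φ ψ))) h₁.deduction) h₂.deduction)

lemma nec_mem_of_mem_canonicalOmega (hX : MaxConsistent X) {ω : Set Formula}
    (hω : ω ∈ canonicalOmega X) (h : φ.nec ∈ ω) : φ.nec ∈ X := by
  by_contra hnX
  have hneg : φ.nec.neg.nec ∈ X :=
    hX.mem_of_provFrom (.mp (.thm (.negIntro φ)) (.hyp (hX.neg_mem_of_notMem hnX)))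
  exact hω.1.1.neg_notMem h (hω.2 _ hneg)

end MaxConsistent

/-- In the canonical game `G(X)`: for any `ω, ω' ∈ Ω` and any formula `φ`,
if `N φ ∈ ω` then `φ ∈ ω'`. -/
theorem nec_member_canonical (X : Set Formula) (hX : MaxConsistent X)
    (ω : Set Formula) (hω : ω ∈ canonicalOmega X)
    (ω' : Set Formula) (hω' : ω' ∈ canonicalOmega X)
    (φ : Formula) (h : φ.nec ∈ ω) :
    φ ∈ ω' :=
  hω'.2 φ (hX.nec_mem_of_mem_canonicalOmega hω h)
end

section
/- Truth lemma for the canonical game: for each formula φ ∈ Φ, each action of the defender δ ∈ Ω, and each response action ω ∈ [δ] of the attacker, the satisfaction (δ,ω) ⊨ φ holds in the canonical game G(X) if and only if φ ∈ ω. -/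
/-! ### Auxiliary development -/

open Formula

section Taut

/-- Helper to prove `Prov` of tautologies. -/
lemma taut_id (a : Formula) : Prov (a.imp a) :=
  .taut fun v _ hi => by simp only [hi]; cases v a <;> rfl

lemma taut_wk (a b : Formula) : Prov (a.imp (b.imp a)) :=
  .taut fun v _ hi => by simp only [hi]; cases v a <;> cases v b <;> rfl

lemma taut_sAx (a b c : Formula) :
    Prov ((a.imp (b.imp c)).imp ((a.imp b).imp (a.imp c))) :=
  .taut fun v _ hi => by simp only [hi]; cases v a <;> cases v b <;> cases v c <;> rfl

lemma taut_exfalso (a b : Formula) : Prov (a.imp (a.neg.imp b)) :=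
  .taut fun v hn hi => by simp only [hi, hn]; cases v a <;> cases v b <;> rfl

lemma taut_negIntro (a b : Formula) :
    Prov ((a.imp b).imp ((a.imp b.neg).imp a.neg)) :=
  .taut fun v hn hi => by simp only [hi, hn]; cases v a <;> cases v b <;> rfl

lemma taut_negElim (a b : Formula) : Prov (a.neg.imp (a.imp b)) :=
  .taut fun v hn hi => by simp only [hi, hn]; cases v a <;> cases v b <;> rfl

lemma taut_clavius (a : Formula) : Prov ((a.neg.imp a).imp a) :=
  .taut fun v hn hi => by simp only [hi, hn]; cases v a <;> rfl

lemma taut_comp (a b c : Formula) :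
    Prov ((a.imp b).imp ((b.imp c).imp (a.imp c))) :=
  .taut fun v _ hi => by simp only [hi]; cases v a <;> cases v b <;> cases v c <;> rfl

lemma taut_negSwap (a b : Formula) : Prov ((a.imp b.neg).imp (b.imp a.neg)) :=
  .taut fun v hn hi => by simp only [hi, hn]; cases v a <;> cases v b <;> rfl

lemma taut_negSwap' (a b : Formula) : Prov ((a.neg.imp b).imp (b.neg.imp a)) :=
  .taut fun v hn hi => by simp only [hi, hn]; cases v a <;> cases v b <;> rfl

lemma taut_RT (a : Formula) : Prov (a.R.imp a) :=
  .taut fun v hn hi => by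
    simp only [Formula.R, hi, hn]; cases v a <;> cases v a.blame <;> rfl

lemma taut_Rintro (a : Formula) : Prov (a.imp (a.blame.neg.imp a.R)) :=
  .taut fun v hn hi => by
    simp only [Formula.R, hi, hn]; cases v a <;> cases v a.blame <;> rfl

lemma taut_Acong (c p : Formula) :
    Prov ((p.blame.imp (c.imp c.blame)).imp
      ((p.blame.imp p).imp ((p.imp c).imp (p.blame.imp c.blame)))) :=
  .taut fun v hn hi => by
    simp only [hi, hn]
    cases v p <;> cases v c <;> cases v p.blame <;> cases v c.blame <;> rfl

lemma taut_theta (a b : Formula) : Prov ((a.conj (a.imp b)).imp b) :=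
  .taut fun v hn hi => by
    simp only [Formula.conj, hi, hn]; cases v a <;> cases v b <;> rfl

lemma taut_RK (a b : Formula) :
    Prov ((b.blame.imp ((a.conj (a.imp b)).imp (a.conj (a.imp b)).blame)).imp
      (((a.conj (a.imp b)).blame.imp (a.blame.disj (a.imp b).blame)).imp
        ((a.imp b).R.imp (a.R.imp b.R)))) :=
  .taut fun v hn hi => by
    simp only [Formula.R, Formula.conj, Formula.disj, hi, hn]
    cases v a <;> cases v b <;> cases v a.blame <;> cases v b.blame <;>
      cases v (a.imp b).blame <;> cases v (a.imp (a.imp b).neg).neg.blame <;> rfl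

lemma taut_dni (a : Formula) : Prov (a.imp a.neg.neg) :=
  .taut fun v hn hi => by simp only [hi, hn]; cases v a <;> rfl

lemma taut_dne (a : Formula) : Prov (a.neg.neg.imp a) :=
  .taut fun v hn hi => by simp only [hi, hn]; cases v a <;> rfl

lemma taut_R5fin (x y z : Formula) :
    Prov ((y.imp z).imp (z.neg.imp (x.imp (x.imp y).neg))) :=
  .taut fun v hn hi => by
    simp only [hi, hn]; cases v x <;> cases v y <;> cases v z <;> rfl

lemma taut_NR (n f a : Formula) :
    Prov ((n.imp f).imp ((n.imp a.neg).imp (n.imp (f.imp a).neg))) :=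
  .taut fun v hn hi => by
    simp only [hi, hn]; cases v n <;> cases v f <;> cases v a <;> rfl

end Taut

namespace Prov

lemma mp2 {a b c : Formula} (h : Prov (a.imp (b.imp c))) (h1 : Prov a)
    (h2 : Prov b) : Prov c := (h.mp h1).mp h2

/-- Composition of provable implications. -/
lemma comp {a b c : Formula} (h1 : Prov (a.imp b)) (h2 : Prov (b.imp c)) :
    Prov (a.imp c) := (taut_comp a b c).mp2 h1 h2

lemma negSwap {a b : Formula} (h : Prov (a.imp b.neg)) : Prov (b.imp a.neg) :=
  (taut_negSwap a b).mp h

lemma negSwap' {a b : Formula} (h : Prov (a.neg.imp b)) : Prov (b.neg.imp a) :=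
  (taut_negSwap' a b).mp h

end Prov

/-- Positive introspection for `N`, derivable in this S5-like system. -/
lemma prov_N4 (φ : Formula) : Prov (φ.nec.imp φ.nec.nec) := by
  -- Nφ → ¬N¬Nφ
  have s1 : Prov (φ.nec.imp φ.nec.neg.nec.neg) :=
    (Prov.truthN φ.nec.neg).negSwap
  -- ¬N¬Nφ → N¬N¬Nφ
  have s2 : Prov (φ.nec.neg.nec.neg.imp φ.nec.neg.nec.neg.nec) :=
    Prov.negIntro φ.nec.neg
  -- ¬N¬Nφ → Nφ  (contrapositive of negative introspection)
  have s3 : Prov (φ.nec.neg.nec.neg.imp φ.nec) := (Prov.negIntro φ).negSwap'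
  -- N¬N¬Nφ → NNφ
  have s4 : Prov (φ.nec.neg.nec.neg.nec.imp φ.nec.nec) :=
    (Prov.distrib _ _).mp s3.necRule
  exact (s1.comp s2).comp s4

/-- `⊢ φ` implies `⊢ R φ`. -/
lemma provR_nec {φ : Formula} (h : Prov φ) : Prov φ.R := by
  have hnA : Prov φ.blame.neg := (Prov.unavoid φ).mp h.necRule
  exact (taut_Rintro φ).mp2 h hnA

/-- Congruence rule for `A` along provable equivalences. -/
lemma provA_cong {c p : Formula} (h1 : Prov (c.imp p)) (h2 : Prov (p.imp c)) :
    Prov (p.blame.imp c.blame) := by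
  have s := (Prov.strictCond c p).mp h1.necRule
  exact ((taut_Acong c p).mp s).mp2 (Prov.truthA p) h2

/-- Distribution (axiom K) for the derived modality `R`. -/
lemma provR_K (a b : Formula) : Prov ((a.imp b).R.imp (a.R.imp b.R)) := by
  have h1 : Prov ((a.conj (a.imp b)).imp b).nec := (taut_theta a b).necRule
  have h2 := (Prov.strictCond (a.conj (a.imp b)) b).mp h1
  exact (taut_RK a b).mp2 h2 (Prov.conjAx a (a.imp b))

/-- Negative introspection (axiom 5) for the derived modality `R`. -/
lemma provR_5 (φ : Formula) : Prov (φ.R.neg.imp φ.R.neg.R) := by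
  -- `A(¬¬(φ→Aφ)) → A(φ→Aφ)`
  have cong : Prov (φ.R.neg.blame.imp (φ.imp φ.blame).blame) :=
    provA_cong (taut_dni _) (taut_dne _)
  exact ((taut_R5fin φ.R.neg φ.R.neg.blame (φ.imp φ.blame).blame).mp cong).mp
    (Prov.noBlame φ)

/-- Positive introspection (axiom 4) for the derived modality `R`. -/
lemma provR_4 (φ : Formula) : Prov (φ.R.imp φ.R.R) := by
  have s1 : Prov (φ.R.imp φ.R.neg.R.neg) := (taut_RT φ.R.neg).negSwap
  have s2 : Prov (φ.R.neg.R.neg.imp φ.R.neg.R.neg.R) := provR_5 φ.R.neg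
  have s3 : Prov (φ.R.neg.R.neg.imp φ.R) := (provR_5 φ).negSwap'
  have s4 : Prov (φ.R.neg.R.neg.R.imp φ.R.R) :=
    (provR_K _ _).mp (provR_nec s3)
  exact (s1.comp s2).comp s4

/-- `N φ → R φ`. -/
lemma provN_imp_R (φ : Formula) : Prov (φ.nec.imp φ.R) :=
  (taut_NR φ.nec φ φ.blame).mp2 (Prov.truthN φ) (Prov.unavoid φ)

namespace ProvFrom

lemma mono {X Y : Set Formula} {φ : Formula} (h : X ⊆ Y) :
    ProvFrom X φ → ProvFrom Y φ := by
  intro hp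
  induction hp with
  | hyp h' => exact hyp (h h')
  | thm h' => exact thm h'
  | mp _ _ ih1 ih2 => exact ih1.mp ih2

end ProvFrom

/-- Deduction theorem. -/
lemma deduction {X : Set Formula} {φ ψ : Formula}
    (h : ProvFrom (insert φ X) ψ) : ProvFrom X (φ.imp ψ) := by
  induction h with
  | @hyp χ h' =>
    rcases Set.mem_insert_iff.1 h' with h' | h'
    · rw [h']; exact .thm (taut_id φ)
    · exact .mp (.thm (taut_wk χ φ)) (.hyp h')
  | @thm χ h' => exact .mp (.thm (taut_wk χ φ)) (.thm h')
  | @mp a b _ _ ih1 ih2 => exact .mp (.mp (.thm (taut_sAx φ a b)) ih1) ih2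

lemma inconsistent_prov {X : Set Formula}
    (h : ∃ χ, ProvFrom X χ ∧ ProvFrom X χ.neg) (φ : Formula) :
    ProvFrom X φ := by
  obtain ⟨χ, h1, h2⟩ := h
  exact .mp (.mp (.thm (taut_exfalso χ φ)) h1) h2

lemma neg_of_insert_incons {X : Set Formula} {φ : Formula}
    (h : ∃ χ, ProvFrom (insert φ X) χ ∧ ProvFrom (insert φ X) χ.neg) :
    ProvFrom X φ.neg := by
  obtain ⟨χ, h1, h2⟩ := h
  exact .mp (.mp (.thm (taut_negIntro φ χ)) (deduction h1)) (deduction h2)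

lemma consistent_insert_of_prov {X : Set Formula} {φ : Formula}
    (hX : Consistent X) (h : ProvFrom X φ) : Consistent (insert φ X) := by
  intro hc
  obtain ⟨χ, h1, h2⟩ := hc
  exact hX ⟨χ, (deduction h1).mp h, (deduction h2).mp h⟩

/-! ### Maximal consistent sets -/

lemma mcs_not_both {ω : Set Formula} (hω : Consistent ω) {φ : Formula}
    (h1 : φ ∈ ω) (h2 : φ.neg ∈ ω) : False :=
  hω ⟨φ, .hyp h1, .hyp h2⟩

lemma mcs_mem_of_prov {ω : Set Formula} (hω : MaxConsistent ω) {φ : Formula}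
    (h : ProvFrom ω φ) : φ ∈ ω := by
  have hc : Consistent (insert φ ω) := consistent_insert_of_prov hω.1 h
  have := hω.2 _ (Set.subset_insert _ _) hc
  rw [← this]; exact Set.mem_insert _ _

lemma mcs_thm_mp {ω : Set Formula} (hω : MaxConsistent ω) {φ ψ : Formula}
    (h : Prov (φ.imp ψ)) (hφ : φ ∈ ω) : ψ ∈ ω :=
  mcs_mem_of_prov hω (.mp (.thm h) (.hyp hφ))

lemma mcs_neg_iff {ω : Set Formula} (hω : MaxConsistent ω) {φ : Formula} :
    φ.neg ∈ ω ↔ φ ∉ ω := by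
  constructor
  · intro h1 h2; exact mcs_not_both hω.1 h2 h1
  · intro h
    by_contra hn
    have hcons : Consistent (insert φ ω) := fun hc =>
      hn (mcs_mem_of_prov hω (neg_of_insert_incons hc))
    have := hω.2 _ (Set.subset_insert _ _) hcons
    rw [← this] at h
    exact h (Set.mem_insert _ _)

lemma mcs_imp_iff {ω : Set Formula} (hω : MaxConsistent ω) {φ ψ : Formula} :
    φ.imp ψ ∈ ω ↔ (φ ∈ ω → ψ ∈ ω) := by
  constructor
  · intro h hφ
    exact mcs_mem_of_prov hω (.mp (.hyp h) (.hyp hφ))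
  · intro h
    by_cases hφ : φ ∈ ω
    · exact mcs_thm_mp hω (taut_wk ψ φ) (h hφ)
    · exact mcs_thm_mp hω (taut_negElim φ ψ) ((mcs_neg_iff hω).2 hφ)

lemma mcs_R_iff {ω : Set Formula} (hω : MaxConsistent ω) {φ : Formula} :
    φ.R ∈ ω ↔ (φ ∈ ω ∧ φ.blame ∉ ω) := by
  rw [Formula.R, mcs_neg_iff hω]
  constructor
  · intro h
    by_cases hφ : φ ∈ ω
    · refine ⟨hφ, fun hA => h ((mcs_imp_iff hω).2 fun _ => hA)⟩
    · exact absurd ((mcs_imp_iff hω).2 fun h' => absurd h' hφ) h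
  · rintro ⟨h1, h2⟩ h
    exact h2 (mcs_mem_of_prov hω (.mp (.hyp h) (.hyp h1)))

/-! ### Lindenbaum lemma -/

lemma provFrom_finite {X : Set Formula} {φ : Formula} (h : ProvFrom X φ) :
    ∃ Y : Set Formula, Y ⊆ X ∧ Y.Finite ∧ ProvFrom Y φ := by
  induction h with
  | @hyp χ h' =>
    exact ⟨{χ}, Set.singleton_subset_iff.2 h', Set.finite_singleton _,
      .hyp rfl⟩
  | @thm χ h' => exact ⟨∅, Set.empty_subset _, Set.finite_empty, .thm h'⟩
  | mp _ _ ih1 ih2 =>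
    obtain ⟨Y1, hs1, hf1, hp1⟩ := ih1
    obtain ⟨Y2, hs2, hf2, hp2⟩ := ih2
    exact ⟨Y1 ∪ Y2, Set.union_subset hs1 hs2, hf1.union hf2,
      (hp1.mono Set.subset_union_left).mp (hp2.mono Set.subset_union_right)⟩

lemma chain_bound {c : Set (Set Formula)} (hc : IsChain (· ⊆ ·) c)
    (hne : c.Nonempty) {t : Set Formula} (ht : t.Finite) :
    t ⊆ ⋃₀ c → ∃ m ∈ c, t ⊆ m := by
  induction t, ht using Set.Finite.induction_on with
  | empty => exact fun _ => ⟨hne.choose, hne.choose_spec, Set.empty_subset _⟩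
  | @insert a s _ _ ih =>
    intro hsub
    obtain ⟨m1, hm1, ham1⟩ := hsub (Set.mem_insert _ _)
    obtain ⟨m2, hm2, hsm2⟩ := ih ((Set.subset_insert a s).trans hsub)
    rcases hc.total hm1 hm2 with h | h
    · exact ⟨m2, hm2, Set.insert_subset (h ham1) hsm2⟩
    · exact ⟨m1, hm1, Set.insert_subset ham1 (hsm2.trans h)⟩

lemma lindenbaum {Y : Set Formula} (h : Consistent Y) :
    ∃ X, Y ⊆ X ∧ MaxConsistent X := by
  obtain ⟨m, hYm, hmax⟩ := zorn_subset_nonempty {Z | Consistent Z}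
    (fun c hcS hchain hcne => by
      refine ⟨⋃₀ c, ?_, fun s hs => Set.subset_sUnion_of_mem hs⟩
      intro hcontra
      obtain ⟨χ, h1, h2⟩ := hcontra
      obtain ⟨Y1, hs1, hf1, hp1⟩ := provFrom_finite h1
      obtain ⟨Y2, hs2, hf2, hp2⟩ := provFrom_finite h2
      obtain ⟨mm, hmm, hsubmm⟩ := chain_bound hchain hcne (hf1.union hf2)
        (Set.union_subset hs1 hs2)
      exact hcS hmm ⟨χ, hp1.mono ((Set.subset_union_left).trans hsubmm),
        hp2.mono ((Set.subset_union_right).trans hsubmm)⟩) Y h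
  refine ⟨m, hYm, hmax.1, fun Z hmZ hZ => ?_⟩
  exact Set.Subset.antisymm (hmax.2 hZ hmZ) hmZ

/-! ### Box-closure of maximal consistent sets -/

lemma box_closure (box : Formula → Formula)
    (hnec : ∀ {a : Formula}, Prov a → Prov (box a))
    (hK : ∀ a b : Formula, Prov ((box (a.imp b)).imp ((box a).imp (box b))))
    {ω : Set Formula} (hω : MaxConsistent ω) {S : Set Formula} {φ : Formula}
    (hS : ∀ γ ∈ S, box γ ∈ ω) (h : ProvFrom S φ) : box φ ∈ ω := by
  induction h with
  | hyp h' => exact hS _ h'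
  | thm h' => exact mcs_mem_of_prov hω (.thm (hnec h'))
  | @mp a b _ _ ih1 ih2 =>
    exact mcs_mem_of_prov hω (.mp (.mp (.thm (hK a b)) (.hyp ih1)) (.hyp ih2))

/-- Truth lemma for the canonical game `G(X)`: for each formula `φ`, each action
`δ ∈ Ω` of the defender, and each response action `ω ∈ [δ]` of the attacker,
`(δ, ω) ⊨ φ` holds in `G(X)` if and only if `φ ∈ ω`. -/
theorem truth_lemma (X : Set Formula) (hX : MaxConsistent X)
    (φ : Formula) (δ : (canonicalGame X).D) (ω : (canonicalGame X).A δ) :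
    Sat (canonicalGame X) φ δ ω ↔ φ ∈ ω.val.val := by
  induction φ generalizing δ ω with
  | var p => exact Iff.rfl
  | neg φ ih =>
    have hω := ω.val.property.1
    simp only [Sat]
    rw [ih δ ω]
    exact (mcs_neg_iff hω).symm
  | imp φ ψ ih1 ih2 =>
    have hω := ω.val.property.1
    simp only [Sat]
    rw [ih1 δ ω, ih2 δ ω]
    exact (mcs_imp_iff hω).symm
  | nec φ ih =>
    have hXiff : ∀ M : Set Formula, M ∈ canonicalOmega X →
        (φ.nec ∈ X ↔ φ.nec ∈ M) := by
      intro M hM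
      constructor
      · intro h
        exact hM.2 _ (mcs_thm_mp hX (prov_N4 φ) h)
      · intro h
        by_contra hn
        have h1 : φ.nec.neg ∈ X := (mcs_neg_iff hX).2 hn
        have h2 : φ.nec.neg.nec ∈ X := mcs_thm_mp hX (Prov.negIntro φ) h1
        exact mcs_not_both hM.1.1 h (hM.2 _ h2)
    simp only [Sat]
    constructor
    · intro h
      refine (hXiff _ ω.val.property).1 ?_
      by_contra hn
      have hY : Consistent (insert φ.neg {σ | σ.nec ∈ X}) := by
        intro hc
        apply hn
        have p1 : ProvFrom (insert φ.neg {σ | σ.nec ∈ X}) φ :=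
          inconsistent_prov hc φ
        have p2 : ProvFrom {σ | σ.nec ∈ X} φ :=
          (ProvFrom.thm (taut_clavius φ)).mp (deduction p1)
        exact box_closure Formula.nec (fun h => h.necRule) Prov.distrib hX
          (fun γ hγ => hγ) p2
      obtain ⟨M, hYM, hM⟩ := lindenbaum hY
      have hMΩ : M ∈ canonicalOmega X :=
        ⟨hM, fun σ hσ => hYM (Set.mem_insert_of_mem _ hσ)⟩
      have hsat := h ⟨M, hMΩ⟩ ⟨⟨M, hMΩ⟩, fun _ => Iff.rfl⟩
      rw [ih ⟨M, hMΩ⟩ ⟨⟨M, hMΩ⟩, fun _ => Iff.rfl⟩] at hsat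
      exact mcs_not_both hM.1 hsat (hYM (Set.mem_insert _ _))
    · intro h d' a'
      rw [ih d' a']
      exact a'.val.property.2 φ ((hXiff _ ω.val.property).2 h)
  | blame φ ih =>
    have hω : MaxConsistent ω.val.val := ω.val.property.1
    simp only [Sat]
    constructor
    · rintro ⟨h1, ω₀, h0⟩
      rw [ih δ ω] at h1
      rw [ih δ ω₀] at h0
      by_contra hA
      have hR : φ.R ∈ ω.val.val := (mcs_R_iff hω).2 ⟨h1, hA⟩
      have hR0 : φ.R ∈ ω₀.val.val := (((ω.property φ).symm.trans
        (ω₀.property φ))).1 hR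
      exact h0 (mcs_thm_mp ω₀.val.property.1 (taut_RT φ) hR0)
    · intro hA
      refine ⟨(ih δ ω).2 (mcs_thm_mp hω (Prov.truthA φ) hA), ?_⟩
      set S : Set Formula := {χ | χ.R ∈ ω.val.val} with hSdef
      have hRclose : ∀ ψ : Formula, ProvFrom S ψ → ψ.R ∈ ω.val.val :=
        fun ψ hp => box_closure Formula.R (fun h => provR_nec h) provR_K hω
          (fun γ hγ => hγ) hp
      have hY : Consistent (insert φ.neg S) := by
        intro hc
        have p1 : ProvFrom (insert φ.neg S) φ := inconsistent_prov hc φ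
        have p2 : ProvFrom S φ :=
          (ProvFrom.thm (taut_clavius φ)).mp (deduction p1)
        exact ((mcs_R_iff hω).1 (hRclose φ p2)).2 hA
      obtain ⟨M, hYM, hM⟩ := lindenbaum hY
      have hSM : S ⊆ M := (Set.subset_insert _ _).trans hYM
      have hMΩ : M ∈ canonicalOmega X := by
        refine ⟨hM, fun σ hσ => ?_⟩
        have h1 : σ.nec.nec ∈ X := mcs_thm_mp hX (prov_N4 σ) hσ
        have h2 : σ.nec ∈ ω.val.val := ω.val.property.2 _ h1
        exact hSM (mcs_thm_mp hω (provN_imp_R σ) h2)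
      have hsimM : simRel ω.val.val M := by
        intro χ
        constructor
        · intro h
          exact hSM (mcs_thm_mp hω (provR_4 χ) h)
        · intro h
          by_contra hn
          have h1 : χ.R.neg ∈ ω.val.val := (mcs_neg_iff hω).2 hn
          exact mcs_not_both hM.1 h (hSM (mcs_thm_mp hω (provR_5 χ) h1))
      have hsimδM : simRel δ.val M := fun χ => (ω.property χ).trans (hsimM χ)
      refine ⟨⟨⟨M, hMΩ⟩, hsimδM⟩, ?_⟩
      rw [ih δ ⟨⟨M, hMΩ⟩, hsimδM⟩]
      exact fun hmem => mcs_not_both hM.1 hmem (hYM (Set.mem_insert _ _))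
end
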